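/- arXiv:math/0405588 — 6 statements merged into one kernel-verified Lean document; each statement's English description precedes it below -/
import Mathlib

section
/- For b ∈ (0,1) and t ∈ [0,1], the partial derivative with respect to b of ∫₀¹ b/√(b⁴s⁴+1+2b²s²cos ρ) ds equals ∫₀¹ (1−b⁴s⁴)/(b⁴s⁴+1+2b²s²cos ρ)^{3/2} ds, which is strictly positive. -/
open Real MeasureTheory intervalIntegral Set

/-! The radicand is `(x²s² + cos ρ)² + sin² ρ ≥ sin² ρ > 0`, so the integrand is smooth in `x`,
and for `|x| < 1` its `x`-derivative `(1 - x⁴s⁴) / radicand^{3/2}` lies between `0` and `|sin ρ|⁻³`.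
Dominated convergence then lets us differentiate under the integral sign, and the derivative
integrand is positive on `(0, 1)`. -/

lemma sin_sq_le_radicand (ρ x t : ℝ) :
    sin ρ ^ 2 ≤ x^4*t^4 + 1 + 2*x^2*t^2*cos ρ := by
  nlinarith [sq_nonneg (x^2*t^2 + cos ρ), sin_sq_add_cos_sq ρ]

lemma radicand_pos {ρ : ℝ} (hρ : sin ρ ≠ 0) (x t : ℝ) :
    0 < x^4*t^4 + 1 + 2*x^2*t^2*cos ρ :=
  (pow_pos (abs_pos.2 hρ) 2).trans_le ((sq_abs _).trans_le (sin_sq_le_radicand ρ x t))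

lemma HasDerivAt.id_div_sqrt {Q : ℝ → ℝ} {Q' x : ℝ} (hQ : HasDerivAt Q Q' x) (hpos : 0 < Q x) :
    HasDerivAt (fun y => y / √(Q y)) ((Q x - x * Q' / 2) / Q x ^ ((3:ℝ)/2)) x := by
  have hsqrt : 0 < √(Q x) := sqrt_pos.2 hpos
  have h32 : Q x ^ ((3:ℝ)/2) = Q x * √(Q x) := by
    rw [show (3:ℝ)/2 = 1 + 1/2 by norm_num, rpow_add hpos, rpow_one, sqrt_eq_rpow]
  refine ((hasDerivAt_id x).div (hQ.sqrt hpos.ne') hsqrt.ne').congr_deriv ?_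
  rw [h32, sq_sqrt hpos.le]
  field_simp
  rw [sq_sqrt hpos.le, id]
  ring

lemma hasDerivAt_div_sqrt_radicand {ρ : ℝ} (hρ : sin ρ ≠ 0) (t x : ℝ) :
    HasDerivAt (fun x : ℝ => x / √(x^4*t^4 + 1 + 2*x^2*t^2*cos ρ))
      ((1 - x^4*t^4) / (x^4*t^4 + 1 + 2*x^2*t^2*cos ρ) ^ ((3:ℝ)/2)) x := by
  have hQ : HasDerivAt (fun x : ℝ => x^4*t^4 + 1 + 2*x^2*t^2*cos ρ)
      (4*x^3*t^4 + 4*x*t^2*cos ρ) x := by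
    refine ((((hasDerivAt_pow 4 x).mul_const (t^4)).add_const 1).add
      ((((hasDerivAt_pow 2 x).const_mul 2).mul_const (t^2)).mul_const (cos ρ))).congr_deriv ?_
    push_cast
    ring
  convert hQ.id_div_sqrt (radicand_pos hρ x t) using 2
  ring

lemma continuous_div_sqrt_radicand {ρ : ℝ} (hρ : sin ρ ≠ 0) (x : ℝ) :
    Continuous fun t : ℝ => x / √(x^4*t^4 + 1 + 2*x^2*t^2*cos ρ) :=
  continuous_const.div (by fun_prop) fun t => (sqrt_pos.2 (radicand_pos hρ x t)).ne'

lemma continuous_one_sub_div_radicand_rpow {ρ : ℝ} (hρ : sin ρ ≠ 0) (x : ℝ) :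
    Continuous fun t : ℝ => (1 - x^4*t^4) / (x^4*t^4 + 1 + 2*x^2*t^2*cos ρ) ^ ((3:ℝ)/2) :=
  (by fun_prop : Continuous fun t : ℝ => 1 - x^4*t^4).div
    ((by fun_prop : Continuous fun t : ℝ => x^4*t^4 + 1 + 2*x^2*t^2*cos ρ).rpow_const
      fun _ => Or.inr (by norm_num))
    fun t => (rpow_pos_of_pos (radicand_pos hρ x t) _).ne'

lemma pow_four_mul_pow_four_le_one {x t : ℝ} (hx : |x| ≤ 1) (ht : |t| ≤ 1) : x^4*t^4 ≤ 1 := by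
  rw [← mul_pow, ← (by decide : Even 4).pow_abs]
  exact pow_le_one₀ (abs_nonneg _) (abs_mul x t ▸ mul_le_one₀ hx (abs_nonneg t) ht)

lemma abs_one_sub_div_radicand_rpow_le {ρ x t : ℝ} (hρ : sin ρ ≠ 0) (hx : |x| ≤ 1)
    (ht : |t| ≤ 1) :
    |(1 - x^4*t^4) / (x^4*t^4 + 1 + 2*x^2*t^2*cos ρ) ^ ((3:ℝ)/2)|
      ≤ 1 / (sin ρ ^ 2) ^ ((3:ℝ)/2) := by
  have hxt := pow_four_mul_pow_four_le_one hx ht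
  rw [abs_div, abs_of_pos (rpow_pos_of_pos (radicand_pos hρ x t) _),
    abs_of_nonneg (sub_nonneg.2 hxt)]
  exact div_le_div₀ zero_le_one (by linarith [show 0 ≤ x^4*t^4 by positivity])
    (rpow_pos_of_pos (pow_pos (abs_pos.2 hρ) 2 |>.trans_eq (sq_abs _)) _)
    (rpow_le_rpow (sq_nonneg _) (sin_sq_le_radicand ρ x t) (by norm_num))

lemma one_sub_div_radicand_rpow_pos {ρ x t : ℝ} (hρ : sin ρ ≠ 0) (hx : |x| ≤ 1)
    (ht : |t| < 1) :
    0 < (1 - x^4*t^4) / (x^4*t^4 + 1 + 2*x^2*t^2*cos ρ) ^ ((3:ℝ)/2) := by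
  have hxt : x^4*t^4 < 1 := by
    rw [← mul_pow, ← (by decide : Even 4).pow_abs]
    exact pow_lt_one₀ (abs_nonneg _)
      (abs_mul x t ▸ mul_lt_one_of_nonneg_of_lt_one_right hx (abs_nonneg t) ht) (by norm_num)
  exact div_pos (sub_pos.2 hxt) (rpow_pos_of_pos (radicand_pos hρ x t) _)

/-- derivative in b of the rescaled integral, and its positivity. -/
theorem stmt1 (ρ b : ℝ) (hρ : ρ ∈ Set.Ioo (0:ℝ) Real.pi) (hb : b ∈ Set.Ioo (0:ℝ) 1) :
    HasDerivAt (fun x : ℝ => ∫ s in (0:ℝ)..1, x / Real.sqrt (x^4*s^4 + 1 + 2*x^2*s^2*Real.cos ρ))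
      (∫ s in (0:ℝ)..1, (1 - b^4*s^4) / (b^4*s^4 + 1 + 2*b^2*s^2*Real.cos ρ) ^ ((3:ℝ)/2)) b ∧
    0 < ∫ s in (0:ℝ)..1, (1 - b^4*s^4) / (b^4*s^4 + 1 + 2*b^2*s^2*Real.cos ρ) ^ ((3:ℝ)/2) := by
  have hsin : sin ρ ≠ 0 := (sin_pos_of_pos_of_lt_pi hρ.1 hρ.2).ne'
  have hb' : |b| < 1 := abs_lt.2 ⟨by linarith [hb.1], hb.2⟩
  have hball : Metric.ball (0:ℝ) 1 ∈ nhds b :=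
    Metric.isOpen_ball.mem_nhds (mem_ball_zero_iff.2 hb')
  have hI : ∀ t ∈ uIoc (0:ℝ) 1, |t| ≤ 1 := fun t ht => by
    rw [uIoc_of_le zero_le_one] at ht
    exact abs_le.2 ⟨by linarith [ht.1], ht.2⟩
  refine ⟨(intervalIntegral.hasDerivAt_integral_of_dominated_loc_of_deriv_le
    (F' := fun x t => (1 - x^4*t^4) / (x^4*t^4 + 1 + 2*x^2*t^2*cos ρ) ^ ((3:ℝ)/2)) hball
    (.of_forall fun x => (continuous_div_sqrt_radicand hsin x).aestronglyMeasurable)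
    ((continuous_div_sqrt_radicand hsin b).intervalIntegrable 0 1)
    (continuous_one_sub_div_radicand_rpow hsin b).aestronglyMeasurable
    (.of_forall fun t ht x hx => abs_one_sub_div_radicand_rpow_le hsin
      (by simpa using (mem_ball_zero_iff.1 hx).le) (hI t ht))
    (intervalIntegrable_const (c := 1 / (sin ρ ^ 2) ^ ((3:ℝ)/2)))
    (.of_forall fun t _ x _ => hasDerivAt_div_sqrt_radicand hsin t x)).2, ?_⟩
  exact intervalIntegral_pos_of_pos_on
    ((continuous_one_sub_div_radicand_rpow hsin b).intervalIntegrable 0 1)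
    (fun t ht => one_sub_div_radicand_rpow_pos hsin hb'.le (abs_lt.2 ⟨by linarith [ht.1], ht.2⟩))
    zero_lt_one
end

section
/- For all x ≥ 0, tanh(x) ≤ x, and consequently for a ∈ (0,1) and β ∈ (0,1], the function f₁(β) = 2β/sinh(2β·artanh a) − (1−a²)/a satisfies f₁'(β) ≤ 0; since f₁(1) = 0, one has f₁(β) ≥ 0 for all β ∈ (0,1], i.e. β(1−b²)/b ≥ (1−a²)/a where b = tanh(β artanh a). -/
/-!
The function `z ↦ z cosh z - sinh z` vanishes at `0` and has derivative `z sinh z ≥ 0`, so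
`sinh x ≤ x cosh x` for `x ≥ 0`. This is `tanh x ≤ x`, and it is also the sign of the derivative
of `u ↦ u / sinh (k u)`, which is therefore antitone on `(0, ∞)` for `k > 0`. With
`t = artanh a`, the identity `(1 - tanh² y) / tanh y = 2 / sinh (2y)` at `y = t` gives
`f₁ 1 = 0`, and at `y = β t` it turns the final inequality into `f₁ β ≥ f₁ 1`.
-/

open Real Set

/-- Inverse hyperbolic tangent. -/
noncomputable def artanh (x : ℝ) : ℝ := Real.log ((1 + x) / (1 - x)) / 2

theorem artanh_eq_real_artanh {x : ℝ} (hx : x ∈ Icc (-1) 1) :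
    _root_.artanh x = Real.artanh x := by
  rw [Real.artanh_eq_half_log hx, _root_.artanh]
  ring

theorem hasDerivAt_mul_cosh_sub_sinh (x : ℝ) :
    HasDerivAt (fun z => z * cosh z - sinh z) (x * sinh x) x :=
  (((hasDerivAt_id' x).mul (hasDerivAt_cosh x)).sub (hasDerivAt_sinh x)).congr_deriv (by ring)

theorem sinh_le_mul_cosh {x : ℝ} (hx : 0 ≤ x) : sinh x ≤ x * cosh x := by
  have hmono : MonotoneOn (fun z => z * cosh z - sinh z) (Ici 0) := by
    refine monotoneOn_of_hasDerivWithinAt_nonneg (convex_Ici 0) (by fun_prop)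
      (fun z _ => (hasDerivAt_mul_cosh_sub_sinh z).hasDerivWithinAt) fun z hz => ?_
    rw [interior_Ici, mem_Ioi] at hz
    exact mul_nonneg hz.le (sinh_nonneg_iff.2 hz.le)
  simpa using hmono self_mem_Ici hx hx

theorem tanh_le_self {x : ℝ} (hx : 0 ≤ x) : tanh x ≤ x := by
  rw [tanh_eq_sinh_div_cosh, div_le_iff₀ (cosh_pos x)]
  exact sinh_le_mul_cosh hx

/-- Both sides vanish at `y = 0` by the convention `t / 0 = 0`. -/
theorem one_sub_tanh_sq_div_tanh (y : ℝ) : (1 - tanh y ^ 2) / tanh y = 2 / sinh (2 * y) := by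
  rcases eq_or_ne y 0 with rfl | hy
  · simp
  have hs : sinh y ≠ 0 := sinh_ne_zero.2 hy
  have hc : cosh y ≠ 0 := (cosh_pos y).ne'
  rw [tanh_eq_sinh_div_cosh, sinh_two_mul]
  field_simp
  linear_combination cosh_sq_sub_sinh_sq y

theorem hasDerivAt_div_sinh_mul {k x : ℝ} (hkx : k * x ≠ 0) :
    HasDerivAt (fun u => u / sinh (k * u))
      ((sinh (k * x) - k * x * cosh (k * x)) / sinh (k * x) ^ 2) x := by
  have hlin : HasDerivAt (fun u => k * u) k x := by simpa using (hasDerivAt_id' x).const_mul k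
  exact ((hasDerivAt_id' x).div ((hasDerivAt_sinh (k * x)).comp x hlin)
    (sinh_ne_zero.2 hkx)).congr_deriv (by simp only [Function.comp_apply]; ring)

theorem div_sinh_mul_deriv_nonpos {k x : ℝ} (hk : 0 ≤ k) (hx : 0 ≤ x) :
    (sinh (k * x) - k * x * cosh (k * x)) / sinh (k * x) ^ 2 ≤ 0 :=
  div_nonpos_of_nonpos_of_nonneg (sub_nonpos.2 (sinh_le_mul_cosh (by positivity))) (sq_nonneg _)

theorem antitoneOn_div_sinh_mul {k : ℝ} (hk : 0 < k) :
    AntitoneOn (fun u => u / sinh (k * u)) (Ioi 0) := by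
  refine antitoneOn_of_hasDerivWithinAt_nonpos (convex_Ioi 0)
    (f' := fun x => (sinh (k * x) - k * x * cosh (k * x)) / sinh (k * x) ^ 2)
    (fun x hx => (hasDerivAt_div_sinh_mul (mul_pos hk hx).ne').continuousAt.continuousWithinAt)
    (fun x hx => ?_) (fun x hx => ?_) <;> rw [interior_Ioi] at hx
  · exact (hasDerivAt_div_sinh_mul (mul_pos hk hx).ne').hasDerivWithinAt
  · exact div_sinh_mul_deriv_nonpos hk.le hx.le

/-- tanh x ≤ x for x ≥ 0, f₁' ≤ 0, f₁(1)=0, f₁ ≥ 0, and the key inequality. -/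
theorem stmt6 (a : ℝ) (ha : a ∈ Set.Ioo (0:ℝ) 1)
    (f₁ : ℝ → ℝ)
    (hf₁ : ∀ β, f₁ β = 2*β / Real.sinh (2*β*_root_.artanh a) - (1 - a^2)/a) :
    (∀ x : ℝ, 0 ≤ x → Real.tanh x ≤ x) ∧
    (∀ β ∈ Set.Ioc (0:ℝ) 1, deriv f₁ β ≤ 0) ∧
    f₁ 1 = 0 ∧
    (∀ β ∈ Set.Ioc (0:ℝ) 1, 0 ≤ f₁ β) ∧
    (∀ β ∈ Set.Ioc (0:ℝ) 1,
      (1 - a^2)/a ≤ β * (1 - (Real.tanh (β*_root_.artanh a))^2) / Real.tanh (β*_root_.artanh a)) := by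
  have ha' : a ∈ Ioo (-1) 1 := Ioo_subset_Ioo_left (by norm_num) ha
  rw [artanh_eq_real_artanh (Ioo_subset_Icc_self ha')] at hf₁ ⊢
  set t := Real.artanh a
  have ht : 0 < 2 * t := by linarith [artanh_pos ha]
  have hf₁' : ∀ β, f₁ β = 2 * (β / sinh (2 * t * β)) - (1 - a ^ 2) / a := fun β => by
    rw [hf₁, mul_div_assoc, mul_right_comm]
  have hf₁_deriv_nonpos (β : ℝ) (hβ : 0 < β) : deriv f₁ β ≤ 0 := by
    rw [funext hf₁', (((hasDerivAt_div_sinh_mul (by positivity)).const_mul 2).sub_const _).deriv]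
    exact mul_nonpos_of_nonneg_of_nonpos zero_le_two (div_sinh_mul_deriv_nonpos ht.le hβ.le)
  have hf₁_one : f₁ 1 = 0 := by
    rw [hf₁, mul_one, ← one_sub_tanh_sq_div_tanh, tanh_artanh ha', sub_self]
  have hf₁_nonneg (β : ℝ) (hβ : β ∈ Ioc (0:ℝ) 1) : 0 ≤ f₁ β := by
    have := antitoneOn_div_sinh_mul ht hβ.1 (mem_Ioi.2 one_pos) hβ.2
    rw [← hf₁_one, hf₁' β, hf₁' 1]
    dsimp only at this
    linarith
  refine ⟨fun x => tanh_le_self, fun β hβ => hf₁_deriv_nonpos β hβ.1, hf₁_one, hf₁_nonneg,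
    fun β hβ => ?_⟩
  have := hf₁_nonneg β hβ
  rw [hf₁] at this
  rw [mul_div_assoc, one_sub_tanh_sq_div_tanh, ← mul_assoc, mul_div_assoc', mul_comm β 2]
  linarith
end

section
/- The function H₃(x) = x² cos(πx/2)/sin³(πx/2) is decreasing on (0,1]: its derivative equals (x/2)·csc⁴(πx/2)·(2 sin(πx) − πx(2+cos(πx))), which is ≤ 0 on (0,1]. -/
/-!
The sign of the derivative is that of `2 sin t - t (2 + cos t)` with `t = π x`. Writing
`t = 2θ`, the inequality `2 sin t ≤ t (2 + cos t)` becomes `2 sin θ cos θ ≤ θ (1 + 2 cos² θ)`,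
which follows from `|sin θ| ≤ θ` and `2 |cos θ| ≤ 1 + 2 cos² θ`.
-/

open Real Set

theorem Real.two_mul_sin_le_mul_two_add_cos {t : ℝ} (ht : 0 ≤ t) :
    2 * sin t ≤ t * (2 + cos t) := by
  obtain ⟨θ, rfl⟩ : ∃ θ, t = 2 * θ := ⟨t / 2, by ring⟩
  have hθ : |sin θ| ≤ θ := by
    simpa [abs_of_nonneg (by linarith : 0 ≤ θ)] using abs_sin_le_abs (x := θ)
  have hsc : sin θ * cos θ ≤ θ * |cos θ| := by
    calc sin θ * cos θ ≤ |sin θ| * |cos θ| := by rw [← abs_mul]; exact le_abs_self _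
      _ ≤ θ * |cos θ| := mul_le_mul_of_nonneg_right hθ (abs_nonneg _)
  rw [sin_two_mul, cos_two_mul, ← sq_abs (cos θ)]
  nlinarith [mul_nonneg (by linarith : 0 ≤ θ) (sq_nonneg (2 * |cos θ| - 1))]

theorem hasDerivAt_sq_mul_cos_div_sin_pow_three {x : ℝ} (hx : sin (π * x / 2) ≠ 0) :
    HasDerivAt (fun x => x ^ 2 * cos (π * x / 2) / sin (π * x / 2) ^ 3)
      (x / 2 * (sin (π * x / 2))⁻¹ ^ 4 * (2 * sin (π * x) - π * x * (2 + cos (π * x)))) x := by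
  have hu : HasDerivAt (fun x : ℝ => π * x / 2) (π / 2) x := by
    simpa using ((hasDerivAt_id x).const_mul π).div_const 2
  have h := ((hasDerivAt_pow 2 x).mul ((hasDerivAt_cos _).comp x hu)).div
    (((hasDerivAt_sin _).comp x hu).pow 3) (pow_ne_zero 3 hx)
  refine h.congr_deriv ?_
  simp only [Pi.mul_apply, Pi.pow_apply, Function.comp_apply]
  rw [show π * x = 2 * (π * x / 2) by ring, sin_two_mul, cos_two_mul]
  field_simp
  linear_combination (-(π * x ^ 2 * sin (π * x / 2) ^ 2)) * sin_sq_add_cos_sq (π * x / 2)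

/-- H₃(x) = x² cos(πx/2)/sin³(πx/2) is decreasing on (0,1] with the stated derivative. -/
theorem stmt8 (H₃ : ℝ → ℝ)
    (hH₃ : ∀ x, H₃ x = x^2 * Real.cos (Real.pi*x/2) / (Real.sin (Real.pi*x/2))^3) :
    AntitoneOn H₃ (Set.Ioc (0:ℝ) 1) ∧
    ∀ x ∈ Set.Ioc (0:ℝ) 1,
      deriv H₃ x = (x/2) * ((Real.sin (Real.pi*x/2))⁻¹)^4 *
        (2 * Real.sin (Real.pi*x) - Real.pi*x*(2 + Real.cos (Real.pi*x))) ∧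
      deriv H₃ x ≤ 0 := by
  set H₃' : ℝ → ℝ := fun x =>
    x / 2 * (sin (π * x / 2))⁻¹ ^ 4 * (2 * sin (π * x) - π * x * (2 + cos (π * x)))
  have hderiv : ∀ x ∈ Ioc (0:ℝ) 1, HasDerivAt H₃ (H₃' x) x := fun x hx => by
    rw [funext hH₃]
    refine hasDerivAt_sq_mul_cos_div_sin_pow_three (sin_pos_of_pos_of_lt_pi ?_ ?_).ne'
    · have := hx.1; positivity
    · nlinarith [pi_pos, hx.2]
  have hnonpos : ∀ x ∈ Ioc (0:ℝ) 1, H₃' x ≤ 0 := fun x hx =>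
    mul_nonpos_of_nonneg_of_nonpos (by have := hx.1; positivity)
      (sub_nonpos.2 (two_mul_sin_le_mul_two_add_cos (by have := hx.1; positivity)))
  refine ⟨antitoneOn_of_hasDerivWithinAt_nonpos (convex_Ioc 0 1)
    (fun x hx => (hderiv x hx).continuousAt.continuousWithinAt)
    (fun x hx => (hderiv x (interior_subset hx)).hasDerivWithinAt)
    (fun x hx => hnonpos x (interior_subset hx)), fun x hx => ?_⟩
  rw [(hderiv x hx).deriv]
  exact ⟨rfl, hnonpos x hx⟩
end

section
/- The function H₂(β) = 4(tan²(π/(2(β+1))) − 1/sin²(βπ/2)) is non-increasing on (0,1] and H₂(1) = 0; hence H₂(β) ≥ 0 for all β ∈ (0,1]. -/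
open Real Set

/-!
With `u = β / (β + 1)` one has `π / (2 * (β + 1)) = π / 2 - u * π / 2`, so
`tan² (π / (2 * (β + 1))) = 1 / sin² (u * π / 2) - 1` and
`H₂ β = 4 * (1 / sin² (u * π / 2) - 1 / sin² (β * π / 2) - 1)`.
Differentiating gives `H₂' β = (4 * π / β²) * (H₃ β - H₃ u)` with
`H₃ x = x² cos (x * π / 2) / sin³ (x * π / 2)`. At `θ = x * π / 2` the derivative of `H₃` has the
sign of `sin (2 * θ) - θ * (2 + cos (2 * θ)) ≤ 0`, so `H₃` decreases on `(0, 2)`; as `u ≤ β`,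
`H₂' ≤ 0`.
-/
lemma antitoneOn_Ioo_of_hasDerivAt_nonpos {f f' : ℝ → ℝ} {a b : ℝ}
    (hf : ∀ x ∈ Ioo a b, HasDerivAt f (f' x) x) (hf' : ∀ x ∈ Ioo a b, f' x ≤ 0) :
    AntitoneOn f (Ioo a b) :=
  antitoneOn_of_hasDerivWithinAt_nonpos (convex_Ioo a b)
    (fun x hx => (hf x hx).continuousAt.continuousWithinAt)
    (by rw [interior_Ioo]; exact fun x hx => (hf x hx).hasDerivWithinAt)
    (by rwa [interior_Ioo])

lemma sin_mul_pi_div_two_pos {x : ℝ} (h0 : 0 < x) (h2 : x < 2) : 0 < sin (x * π / 2) :=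
  sin_pos_of_pos_of_lt_pi (by positivity) (by nlinarith [pi_pos])

lemma two_mul_sin_mul_cos_le {θ : ℝ} (hθ : 0 ≤ θ) :
    2 * sin θ * cos θ ≤ θ * (1 + 2 * cos θ ^ 2) := by
  -- If `cos θ ≥ 0`, use `sin θ ≤ θ` and `2 c ≤ 1 + 2 c²`; otherwise `θ > π / 2 > 1 ≥ sin (2 θ)`.
  rcases le_or_gt 0 (cos θ) with hc | hc
  · nlinarith [sin_le hθ, sq_nonneg (cos θ - 1), sq_nonneg (cos θ)]
  · have hθ' : π / 2 < θ := by
      by_contra! h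
      exact hc.not_ge (cos_nonneg_of_mem_Icc ⟨by linarith [pi_pos], h⟩)
    have : 2 * sin θ * cos θ ≤ 1 := by rw [← sin_two_mul]; exact sin_le_one _
    nlinarith [pi_gt_three, sq_nonneg (cos θ)]

noncomputable def H₃ (x : ℝ) : ℝ := x ^ 2 * cos (x * π / 2) / sin (x * π / 2) ^ 3

noncomputable def invSinSq (x : ℝ) : ℝ := 1 / sin (x * π / 2) ^ 2

lemma hasDerivAt_mul_pi_div_two (x : ℝ) : HasDerivAt (fun y : ℝ => y * π / 2) (π / 2) x := by
  simpa using ((hasDerivAt_id x).mul_const π).div_const 2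

lemma hasDerivAt_H₃ {x : ℝ} (hs : sin (x * π / 2) ≠ 0) :
    HasDerivAt H₃ (x * (2 * sin (x * π / 2) * cos (x * π / 2)
      - x * π / 2 * (1 + 2 * cos (x * π / 2) ^ 2)) / sin (x * π / 2) ^ 4) x := by
  have hθ := hasDerivAt_mul_pi_div_two x
  refine (((hasDerivAt_pow 2 x).mul hθ.cos).div (hθ.sin.pow 3) (pow_ne_zero 3 hs)).congr_deriv ?_
  simp only [Pi.pow_apply, Pi.mul_apply, Nat.cast_ofNat]
  field_simp
  linear_combination (-x ^ 2 * π * sin (x * π / 2) ^ 2) * sin_sq_add_cos_sq (x * π / 2)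

lemma antitoneOn_H₃ : AntitoneOn H₃ (Ioo 0 2) := by
  refine antitoneOn_Ioo_of_hasDerivAt_nonpos
    (fun x hx => hasDerivAt_H₃ (sin_mul_pi_div_two_pos hx.1 hx.2).ne') fun x hx => ?_
  have hθ : 0 ≤ x * π / 2 := by nlinarith [pi_pos, hx.1]
  exact div_nonpos_of_nonpos_of_nonneg
    (mul_nonpos_of_nonneg_of_nonpos hx.1.le (sub_nonpos.2 (two_mul_sin_mul_cos_le hθ)))
    (by positivity)

lemma hasDerivAt_invSinSq {x : ℝ} (hx : x ≠ 0) (hs : sin (x * π / 2) ≠ 0) :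
    HasDerivAt invSinSq (-π * H₃ x / x ^ 2) x := by
  refine ((hasDerivAt_const x 1).div ((hasDerivAt_mul_pi_div_two x).sin.pow 2)
    (pow_ne_zero 2 hs)).congr_deriv ?_
  simp only [H₃, Pi.pow_apply, Nat.cast_ofNat]
  field_simp
  ring

lemma hasDerivAt_invSinSq_div_add_one_sub {β : ℝ} (h0 : 0 < β) (h2 : β < 2) :
    HasDerivAt (fun β => invSinSq (β / (β + 1)) - invSinSq β)
      (π * (H₃ β - H₃ (β / (β + 1))) / β ^ 2) β := by
  have hβ1 : β + 1 ≠ 0 := by positivity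
  have hu0 : 0 < β / (β + 1) := by positivity
  have hu2 : β / (β + 1) < 2 := by rw [div_lt_iff₀ (by positivity)]; linarith
  have hu := ((hasDerivAt_id β).div ((hasDerivAt_id β).add_const 1) hβ1)
  refine (((hasDerivAt_invSinSq hu0.ne' (sin_mul_pi_div_two_pos hu0 hu2).ne').comp β hu).sub
    (hasDerivAt_invSinSq h0.ne' (sin_mul_pi_div_two_pos h0 h2).ne')).congr_deriv ?_
  simp only [id]
  field_simp
  ring

lemma antitoneOn_invSinSq_div_add_one_sub :
    AntitoneOn (fun β => invSinSq (β / (β + 1)) - invSinSq β) (Ioo 0 2) := by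
  refine antitoneOn_Ioo_of_hasDerivAt_nonpos
    (fun β hβ => hasDerivAt_invSinSq_div_add_one_sub hβ.1 hβ.2) fun β hβ => ?_
  obtain ⟨h0, h2⟩ := hβ
  have hu0 : 0 < β / (β + 1) := by positivity
  have huβ : β / (β + 1) ≤ β := div_le_self h0.le (by linarith)
  have := antitoneOn_H₃ ⟨hu0, huβ.trans_lt h2⟩ ⟨h0, h2⟩ huβ
  exact div_nonpos_of_nonpos_of_nonneg (by nlinarith [pi_pos]) (sq_nonneg β)

lemma tan_sq_pi_div_two_mul_add_one {β : ℝ} (hβ : 0 < β) :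
    tan (π / (2 * (β + 1))) ^ 2 = invSinSq (β / (β + 1)) - 1 := by
  have hs : sin (β / (β + 1) * π / 2) ≠ 0 := by
    refine (sin_mul_pi_div_two_pos (by positivity) ?_).ne'
    rw [div_lt_iff₀ (by positivity)]; linarith
  have hangle : π / (2 * (β + 1)) = π / 2 - β / (β + 1) * π / 2 := by
    field_simp; ring
  rw [hangle, tan_eq_sin_div_cos, sin_pi_div_two_sub, cos_pi_div_two_sub, invSinSq]
  generalize β / (β + 1) * π / 2 = θ at hs ⊢
  field_simp
  linear_combination cos_sq_add_sin_sq θ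

/-- H₂ is non-increasing on (0,1], H₂(1) = 0, hence H₂ ≥ 0 on (0,1]. -/
theorem stmt9 (H₂ : ℝ → ℝ)
    (hH₂ : ∀ β, H₂ β =
      4 * ((Real.tan (Real.pi/(2*(β+1))))^2 - 1/(Real.sin (β*Real.pi/2))^2)) :
    AntitoneOn H₂ (Set.Ioc (0:ℝ) 1) ∧ H₂ 1 = 0 ∧ ∀ β ∈ Set.Ioc (0:ℝ) 1, 0 ≤ H₂ β := by
  have hcot : EqOn (fun β => 4 * (invSinSq (β / (β + 1)) - invSinSq β - 1)) H₂ (Ioc 0 1) :=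
    fun β hβ => by
      rw [hH₂, tan_sq_pi_div_two_mul_add_one hβ.1]
      unfold invSinSq
      ring
  have hanti : AntitoneOn H₂ (Ioc 0 1) := by
    refine AntitoneOn.congr (fun a ha b hb hab => ?_) hcot
    have := antitoneOn_invSinSq_div_add_one_sub (Ioc_subset_Ioo_right one_lt_two ha)
      (Ioc_subset_Ioo_right one_lt_two hb) hab
    dsimp only at this ⊢
    linarith
  have h1 : H₂ 1 = 0 := by
    rw [hH₂, show π / (2 * (1 + 1)) = π / 4 by ring, tan_pi_div_four, one_mul, sin_pi_div_two]
    norm_num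
  exact ⟨hanti, h1, fun β hβ => h1 ▸ hanti hβ ⟨one_pos, le_rfl⟩ hβ.2⟩
end

section
/- For β ∈ (0,1], 2 tan(π/(2(β+1))) ≥ 2/sin(βπ/2), i.e. sin(βπ/2)·tan(π/(2(β+1))) ≥ 1. -/
/-!
Put φ = βπ/(2(β+1)), so that π/(2(β+1)) = π/2 - φ and the claim reads sin φ ≤ sin(βπ/2) cos φ.
It is an equality at β = 1 and becomes one in the limit β → 0, so each end needs its own estimate.
For β ≤ 1/2 the Taylor bounds sin φ ≤ φ, 1 - φ²/2 ≤ cos φ and a - a³/6 ≤ sin a (a = βπ/2) suffice.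
For β > 1/2 write φ = π/4 - η and βπ/2 = π/2 - 2x with x = (1-β)π/4 and η = x/(β+1); the claim
becomes tan² x ≤ tan η, which follows from sin x ≤ x, 1 - x²/2 ≤ cos x and η ≤ tan η.
-/

open Real

lemma one_le_mul_tan_pi_div_two_sub {s φ : ℝ} (h0 : 0 < φ) (h1 : φ < π / 2)
    (h : sin φ ≤ s * cos φ) : 1 ≤ s * tan (π / 2 - φ) := by
  have hsin : 0 < sin φ := sin_pos_of_pos_of_lt_pi h0 (by linarith [pi_pos])
  rw [tan_pi_div_two_sub, tan_eq_sin_div_cos, inv_div, ← mul_div_assoc, le_div_iff₀ hsin, one_mul]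
  exact h

lemma sin_le_sin_mul_cos_of_le {a φ : ℝ} (ha : 0 ≤ a) (ha' : a ≤ π) (hφ : 0 ≤ φ) (hφ' : φ ^ 2 ≤ 2)
    (h : φ ≤ (a - a ^ 3 / 6) * (1 - φ ^ 2 / 2)) : sin φ ≤ sin a * cos φ :=
  calc sin φ ≤ φ := sin_le hφ
    _ ≤ (a - a ^ 3 / 6) * (1 - φ ^ 2 / 2) := h
    _ ≤ sin a * cos φ :=
      mul_le_mul (sin_ge_sub_cube ha) one_sub_sq_div_two_le_cos (by linarith)
        (sin_nonneg_of_nonneg_of_le_pi ha ha')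

lemma sin_sq_mul_cos_le_cos_sq_mul_sin {x η : ℝ} (hx : x ^ 2 ≤ 2) (hη : 0 ≤ η) (hη' : η < π / 2)
    (h : x ^ 2 ≤ η * (1 - x ^ 2 / 2) ^ 2) : sin x ^ 2 * cos η ≤ cos x ^ 2 * sin η := by
  have hcos : 0 ≤ cos η := (cos_pos_of_mem_Ioo ⟨by linarith, hη'⟩).le
  have htan : η * cos η ≤ sin η := by
    have := le_tan hη hη'
    rwa [tan_eq_sin_div_cos, le_div_iff₀ (cos_pos_of_mem_Ioo ⟨by linarith, hη'⟩)] at this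
  have hcx : (1 - x ^ 2 / 2) ^ 2 ≤ cos x ^ 2 :=
    pow_le_pow_left₀ (by linarith) one_sub_sq_div_two_le_cos 2
  calc sin x ^ 2 * cos η ≤ x ^ 2 * cos η := mul_le_mul_of_nonneg_right sin_sq_le_sq hcos
    _ ≤ η * (1 - x ^ 2 / 2) ^ 2 * cos η := mul_le_mul_of_nonneg_right h hcos
    _ = (1 - x ^ 2 / 2) ^ 2 * (η * cos η) := by ring
    _ ≤ cos x ^ 2 * sin η := mul_le_mul hcx htan (by nlinarith) (sq_nonneg _)

lemma sin_pi_div_four_sub_le_cos_two_mul_mul_cos {x η : ℝ}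
    (h : sin x ^ 2 * cos η ≤ cos x ^ 2 * sin η) :
    sin (π / 4 - η) ≤ cos (2 * x) * cos (π / 4 - η) := by
  have h2 : cos (2 * x) * cos (π / 4 - η) - sin (π / 4 - η) =
      √2 * (cos x ^ 2 * sin η - sin x ^ 2 * cos η) := by
    rw [sin_sub, cos_sub, sin_pi_div_four, cos_pi_div_four, cos_two_mul, sin_sq x]
    ring
  nlinarith [mul_nonneg (sqrt_nonneg 2) (sub_nonneg.2 h)]

lemma sin_le_sin_mul_cos_of_le_half {β : ℝ} (h0 : 0 < β) (h1 : β ≤ 1 / 2) :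
    sin (β * π / (2 * (β + 1))) ≤ sin (β * π / 2) * cos (β * π / (2 * (β + 1))) := by
  have hπ : π ^ 2 < 10 := by nlinarith [pi_lt_d2, pi_pos]
  set a := β * π / 2 with ha
  set φ := β * π / (2 * (β + 1)) with hφ
  have ha0 : 0 ≤ a := by positivity
  have ha1 : a ≤ 4 / 5 := by nlinarith [pi_lt_d2]
  have hφa : φ * (β + 1) = a := by rw [hφ, ha]; field_simp
  have hφ0 : 0 ≤ φ := by positivity
  have hφa' : φ ≤ a := by nlinarith
  have hpoly : a ^ 2 * (β + 1) / 6 + a ^ 2 / 2 ≤ β := by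
    rw [ha]; nlinarith [mul_pos h0 h0, mul_pos (mul_pos h0 h0) h0]
  have key : a ^ 3 / 6 + a * φ ^ 2 / 2 ≤ a - φ := by
    have e1 : a - φ = φ * β := by linear_combination -hφa
    have e2 : a ^ 3 / 6 + a * φ ^ 2 / 2 = φ * (a ^ 2 * (β + 1) / 6 + a * φ / 2) := by
      rw [← hφa]; ring
    rw [e1, e2]
    refine mul_le_mul_of_nonneg_left ?_ hφ0
    nlinarith [mul_le_mul_of_nonneg_left hφa' ha0]
  refine sin_le_sin_mul_cos_of_le ha0 (by linarith [pi_gt_three]) hφ0 (by nlinarith) ?_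
  nlinarith [mul_nonneg (pow_nonneg ha0 3) (sq_nonneg φ)]

lemma sin_le_sin_mul_cos_of_half_lt {β : ℝ} (h0 : 1 / 2 < β) (h1 : β ≤ 1) :
    sin (β * π / (2 * (β + 1))) ≤ sin (β * π / 2) * cos (β * π / (2 * (β + 1))) := by
  have hb : 0 < β + 1 := by linarith
  have hπ : π < 3.15 := pi_lt_d2
  set x := (1 - β) * π / 4 with hx
  set η := x / (β + 1) with hη
  have hx0 : 0 ≤ x := by rw [hx]; nlinarith [pi_pos]
  have hx1 : x ≤ 1 / 2 := by rw [hx]; nlinarith [pi_pos]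
  have hηx : η * (β + 1) = x := by rw [hη]; field_simp
  have hη0 : 0 ≤ η := by positivity
  have hηx' : η ≤ x := by nlinarith
  have hpoly : x * (β + 1) ≤ (1 - x ^ 2 / 2) ^ 2 := by
    rw [hx]; nlinarith [mul_pos hb hb, pi_pos]
  have key : x ^ 2 ≤ η * (1 - x ^ 2 / 2) ^ 2 :=
    calc x ^ 2 = η * (x * (β + 1)) := by linear_combination (-x) * hηx
      _ ≤ η * (1 - x ^ 2 / 2) ^ 2 := mul_le_mul_of_nonneg_left hpoly hη0
  have e1 : β * π / (2 * (β + 1)) = π / 4 - η := by rw [hη, hx]; field_simp; ring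
  have e2 : β * π / 2 = π / 2 - 2 * x := by rw [hx]; ring
  rw [e1, e2, sin_pi_div_two_sub]
  exact sin_pi_div_four_sub_le_cos_two_mul_mul_cos
    (sin_sq_mul_cos_le_cos_sq_mul_sin (by nlinarith) hη0 (by linarith [pi_gt_three]) key)

/-- sin(βπ/2)·tan(π/(2(β+1))) ≥ 1 for β ∈ (0,1]. -/
theorem stmt10 : ∀ β ∈ Set.Ioc (0:ℝ) 1,
    1 ≤ Real.sin (β*Real.pi/2) * Real.tan (Real.pi/(2*(β+1))) := by
  rintro β ⟨h0, h1⟩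
  have hφ : π / (2 * (β + 1)) = π / 2 - β * π / (2 * (β + 1)) := by field_simp; ring
  have hφ_lt : β * π / (2 * (β + 1)) < π / 2 := by
    rw [div_lt_div_iff₀ (by positivity) two_pos]; nlinarith [pi_pos]
  rw [hφ]
  refine one_le_mul_tan_pi_div_two_sub (by positivity) hφ_lt ?_
  rcases le_or_gt β (1 / 2) with hsmall | hlarge
  · exact sin_le_sin_mul_cos_of_le_half h0 hsmall
  · exact sin_le_sin_mul_cos_of_half_lt hlarge h1
end

section
/- For ρ ∈ (0,π), ∫₀^ρ sin²(t/2)/(cos(t/2)·√(2(cos t − cos ρ))) dt = (π/2)(sec(ρ/2) − 1). -/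
/-!
With `s = sin (t/2)` and `k = sin (ρ/2)` one has `2 (cos t - cos ρ) = 4 (k² - s²)`, and the
integrand becomes `s² / (2 cos (t/2) √(k² - s²))`. It has the explicit primitive
`sec (ρ/2) · arcsin (tan (t/2) / tan (ρ/2)) - arcsin (s / k)`, which vanishes at `t = 0` and
equals `(π/2)(sec (ρ/2) - 1)` at `t = ρ`. Since the integrand is nonnegative on `(0, ρ)`,
the improper integral converges and the fundamental theorem of calculus applies.
-/

open Real MeasureTheory intervalIntegral Set

theorem sqrt_two_mul_cos_sub_cos (t ρ : ℝ) :
    √(2 * (cos t - cos ρ)) = 2 * √(sin (ρ / 2) ^ 2 - sin (t / 2) ^ 2) := by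
  have h (x : ℝ) : cos x = 1 - 2 * sin (x / 2) ^ 2 := by
    have h2 := cos_two_mul' (x / 2)
    rw [mul_div_cancel₀ x two_ne_zero] at h2
    linear_combination h2 + cos_sq' (x / 2)
  rw [h t, h ρ, show 2 * (1 - 2 * sin (t / 2) ^ 2 - (1 - 2 * sin (ρ / 2) ^ 2))
      = 2 ^ 2 * (sin (ρ / 2) ^ 2 - sin (t / 2) ^ 2) by ring,
    sqrt_mul (by positivity), sqrt_sq zero_le_two]

theorem tan_sq_sub_tan_sq {a b : ℝ} (ha : cos a ≠ 0) (hb : cos b ≠ 0) :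
    tan a ^ 2 - tan b ^ 2 = (sin a ^ 2 - sin b ^ 2) / (cos a * cos b) ^ 2 := by
  rw [tan_eq_sin_div_cos, tan_eq_sin_div_cos, div_pow, div_pow,
    div_sub_div _ _ (pow_ne_zero 2 ha) (pow_ne_zero 2 hb)]
  congr 1
  · linear_combination sin a ^ 2 * sin_sq_add_cos_sq b - sin b ^ 2 * sin_sq_add_cos_sq a
  · ring

theorem HasDerivAt.arcsin_div {f : ℝ → ℝ} {f' x b : ℝ} (hf : HasDerivAt f f' x)
    (hfx : |f x| < b) :
    HasDerivAt (fun y => arcsin (f y / b)) (f' / √(b ^ 2 - f x ^ 2)) x := by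
  have hb : 0 < b := (abs_nonneg _).trans_lt hfx
  have hlt : |f x / b| < 1 := by rwa [abs_div, abs_of_pos hb, div_lt_one hb]
  obtain ⟨hlo, hhi⟩ := abs_lt.1 hlt
  refine ((hasDerivAt_arcsin hlo.ne' hhi.ne).comp x (hf.div_const b)).congr_deriv ?_
  rw [show 1 - (f x / b) ^ 2 = (b ^ 2 - f x ^ 2) / b ^ 2 by field_simp,
    sqrt_div' _ (sq_nonneg b), sqrt_sq hb.le]
  have hgap : 0 < b ^ 2 - f x ^ 2 := by
    rwa [sub_pos, sq_lt_sq, abs_of_pos hb]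
  field_simp

namespace HalfAngleIntegral

noncomputable def integrand (ρ t : ℝ) : ℝ :=
  sin (t / 2) ^ 2 / (cos (t / 2) * √(2 * (cos t - cos ρ)))

noncomputable def primitive (ρ t : ℝ) : ℝ :=
  arcsin (tan (t / 2) / tan (ρ / 2)) / cos (ρ / 2) - arcsin (sin (t / 2) / sin (ρ / 2))

variable {ρ t : ℝ}

theorem cos_half_pos (ht₀ : -π < t) (ht₁ : t < π) : 0 < cos (t / 2) :=
  cos_pos_of_mem_Ioo ⟨by linarith, by linarith⟩

theorem integrand_nonneg (ht₀ : -π < t) (ht₁ : t < π) : 0 ≤ integrand ρ t :=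
  div_nonneg (sq_nonneg _) (mul_nonneg (cos_half_pos ht₀ ht₁).le (sqrt_nonneg _))

theorem primitive_zero : primitive ρ 0 = 0 := by simp [primitive]

theorem primitive_self (hρ₀ : 0 < ρ) (hρ₁ : ρ < π) :
    primitive ρ ρ = π / 2 * (1 / cos (ρ / 2) - 1) := by
  have hsin : sin (ρ / 2) ≠ 0 := (sin_pos_of_pos_of_lt_pi (by linarith) (by linarith)).ne'
  have htan : tan (ρ / 2) ≠ 0 :=
    (tan_pos_of_pos_of_lt_pi_div_two (by linarith) (by linarith)).ne'
  rw [primitive, div_self htan, div_self hsin, arcsin_one]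
  ring

theorem continuousOn_primitive (hρ : ρ < π) : ContinuousOn (primitive ρ) (Icc 0 ρ) := by
  have htan : ContinuousOn (fun t => tan (t / 2)) (Icc 0 ρ) :=
    continuousOn_tan.comp (by fun_prop) fun t ht =>
      (cos_half_pos (by linarith [ht.1, pi_pos]) (ht.2.trans_lt hρ)).ne'
  unfold primitive
  fun_prop

theorem hasDerivAt_primitive (hρ : ρ < π) (ht : t ∈ Ioo 0 ρ) :
    HasDerivAt (primitive ρ) (integrand ρ t) t := by
  obtain ⟨ht₀, htρ⟩ := ht
  have hc : 0 < cos (t / 2) := cos_half_pos (by linarith) (by linarith)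
  have hK : 0 < cos (ρ / 2) := cos_half_pos (by linarith) hρ
  have hs : 0 < sin (t / 2) := sin_pos_of_pos_of_lt_pi (by linarith) (by linarith)
  have hsk : sin (t / 2) < sin (ρ / 2) :=
    sin_lt_sin_of_lt_of_le_pi_div_two (by linarith) (by linarith) (by linarith)
  have hq : 0 < sin (ρ / 2) ^ 2 - sin (t / 2) ^ 2 := by nlinarith
  have htan_sq : tan (ρ / 2) ^ 2 - tan (t / 2) ^ 2
      = (sin (ρ / 2) ^ 2 - sin (t / 2) ^ 2) / (cos (ρ / 2) * cos (t / 2)) ^ 2 :=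
    tan_sq_sub_tan_sq hK.ne' hc.ne'
  have htan_lt : |tan (t / 2)| < tan (ρ / 2) := by
    have hT : 0 < tan (ρ / 2) := tan_pos_of_pos_of_lt_pi_div_two (by linarith) (by linarith)
    rw [← abs_of_pos hT, ← sq_lt_sq, ← sub_pos, htan_sq]
    positivity
  have hd_half : HasDerivAt (fun y : ℝ => y / 2) (1 / 2) t := (hasDerivAt_id t).div_const 2
  have hd_tan : HasDerivAt (fun y => tan (y / 2)) (1 / cos (t / 2) ^ 2 * (1 / 2)) t := by
    exact (hasDerivAt_tan hc.ne').comp t hd_half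
  have hd_sin : HasDerivAt (fun y => sin (y / 2)) (cos (t / 2) * (1 / 2)) t := by
    exact (hasDerivAt_sin (t / 2)).comp t hd_half
  refine (((hd_tan.arcsin_div htan_lt).div_const (cos (ρ / 2))).sub
    (hd_sin.arcsin_div (by rwa [abs_of_pos hs]))).congr_deriv ?_
  rw [integrand, htan_sq, sqrt_div' _ (sq_nonneg _), sqrt_sq (by positivity),
    sqrt_two_mul_cos_sub_cos]
  have hq_sqrt := sqrt_pos.2 hq
  field_simp
  linear_combination (-1) * sin_sq_add_cos_sq (t / 2)

end HalfAngleIntegral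

open HalfAngleIntegral

/-- the explicit value of the improper integral. -/
theorem stmt12 (ρ : ℝ) (hρ : ρ ∈ Set.Ioo (0:ℝ) Real.pi) :
    (∫ t in (0:ℝ)..ρ,
        (Real.sin (t/2))^2 / (Real.cos (t/2) * Real.sqrt (2*(Real.cos t - Real.cos ρ))))
      = Real.pi/2 * (1/Real.cos (ρ/2) - 1) := by
  obtain ⟨hρ₀, hρπ⟩ := hρ
  have hderiv : ∀ t ∈ Ioo 0 ρ, HasDerivAt (primitive ρ) (integrand ρ t) t :=
    fun t ht => hasDerivAt_primitive hρπ ht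
  have hcont := continuousOn_primitive hρπ
  have hint : IntervalIntegrable (integrand ρ) volume 0 ρ := by
    refine intervalIntegrable_deriv_of_nonneg (by rwa [uIcc_of_le hρ₀.le]) ?_ ?_ <;>
      rw [min_eq_left hρ₀.le, max_eq_right hρ₀.le]
    · exact hderiv
    · exact fun t ht => integrand_nonneg (by linarith [ht.1, pi_pos]) (ht.2.trans hρπ)
  calc _ = ∫ t in (0:ℝ)..ρ, integrand ρ t := rfl
    _ = primitive ρ ρ - primitive ρ 0 :=
      integral_eq_sub_of_hasDerivAt_of_le hρ₀.le hcont hderiv hint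
    _ = π / 2 * (1 / cos (ρ / 2) - 1) := by
      rw [primitive_self hρ₀ hρπ, primitive_zero, sub_zero]
end
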